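/- Reduction of constant-domain satisfiability to expanding-domain satisfiability: let φ be a one-variable first-order modal formula with counting quantifiers, m = md(φ), E a unary predicate not occurring in φ, and let N ≥ 1 be a natural number such that if φ is satisfiable with respect to QK then φ is satisfiable in a constant domain model whose domain D has |D| ≤ N. Let ζ := ζ_exp ∧ ζ_dec ∧ ∀x□^{≤m}∀x(∃[≤N]x ⊤(x) ∧ ¬∃[≤N−1]x ⊤(x)), where ⊤(x) := P₀(x) ∨ ¬P₀(x) for a predicate P₀. Then φ is satisfiable with respect to QK if and only if E(x) ∧ ζ ∧ φ^E is satisfiable with respect to QK^exp. -/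

import Mathlib

/-! Syntax of one-variable first-order modal formulas with counting quantifiers:
    φ ::= P(x) | ¬φ | (φ∧φ) | ◇φ | ∃[≤c]x φ. -/

inductive Fml : Type
  | atom : ℕ → Fml
  | neg : Fml → Fml
  | conj : Fml → Fml → Fml
  | dia : Fml → Fml
  | countLe : ℕ → Fml → Fml
deriving DecidableEq

namespace Fml

/-- Subformulas. -/
def sub : Fml → Finset Fml
  | atom n => {atom n}
  | neg ψ => insert (neg ψ) ψ.sub
  | conj ψ χ => insert (conj ψ χ) (ψ.sub ∪ χ.sub)
  | dia ψ => insert (dia ψ) ψ.sub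
  | countLe c ψ => insert (countLe c ψ) ψ.sub

/-- Modal depth. -/
def md : Fml → ℕ
  | atom _ => 0
  | neg ψ => ψ.md
  | conj ψ χ => max ψ.md χ.md
  | dia ψ => ψ.md + 1
  | countLe _ ψ => ψ.md

/-- Capacity: the largest counting-quantifier subscript (0 if none). -/
def cpt : Fml → ℕ
  | atom _ => 0
  | neg ψ => ψ.cpt
  | conj ψ χ => max ψ.cpt χ.cpt
  | dia ψ => ψ.cpt
  | countLe c ψ => max c ψ.cpt

/-- Length of the formula as a string, counting subscripts written in binary. -/
def len : Fml → ℕ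
  | atom _ => 1
  | neg ψ => ψ.len + 1
  | conj ψ χ => ψ.len + χ.len + 1
  | dia ψ => ψ.len + 1
  | countLe c ψ => ψ.len + Nat.size c + 1

/-- Predicate symbols occurring in a formula. -/
def preds : Fml → Finset ℕ
  | atom n => {n}
  | neg ψ => ψ.preds
  | conj ψ χ => ψ.preds ∪ χ.preds
  | dia ψ => ψ.preds
  | countLe _ ψ => ψ.preds

def imp (ψ χ : Fml) : Fml := neg (conj ψ (neg χ))
def or (ψ χ : Fml) : Fml := neg (conj (neg ψ) (neg χ))
def iff (ψ χ : Fml) : Fml := conj (ψ.imp χ) (χ.imp ψ)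
def box (ψ : Fml) : Fml := neg (dia (neg ψ))
/-- `∃x ψ := ¬∃[≤0]x ψ`. -/
def ex (ψ : Fml) : Fml := neg (countLe 0 ψ)
/-- `∀x ψ := ∃[≤0]x ¬ψ`. -/
def fal (ψ : Fml) : Fml := countLe 0 (neg ψ)
/-- A tautology. -/
def top : Fml := neg (conj (atom 0) (neg (atom 0)))

/-- `boxIter n ψ` is `□^n ψ`. -/
def boxIter : ℕ → Fml → Fml
  | 0, ψ => ψ
  | n+1, ψ => (boxIter n ψ).box

/-- `boxLe m ψ` is `⋀_{k=0}^{m} □^k ψ`. -/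
def boxLe : ℕ → Fml → Fml
  | 0, ψ => ψ
  | n+1, ψ => conj (boxLe n ψ) (boxIter (n+1) ψ)

end Fml

/-- A first-order Kripke model `M = (W,R,D,d,I)` (unary predicates suffice for the
one-variable fragment). -/
structure KModel where
  W : Type
  R : W → W → Prop
  D : Type
  Dne : Nonempty D
  dom : W → Set D
  domNe : ∀ w, (dom w).Nonempty
  I : W → ℕ → Set D
  Isub : ∀ w p, I w p ⊆ dom w

/-- Satisfaction `M,w ⊨^a φ`. -/
def KModel.sat (M : KModel) : Fml → M.W → M.D → Prop
  | .atom p, w, a => a ∈ M.I w p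
  | .neg ψ, w, a => ¬ M.sat ψ w a
  | .conj ψ χ, w, a => M.sat ψ w a ∧ M.sat χ w a
  | .dia ψ, w, a => ∃ v, M.R w v ∧ M.sat ψ v a
  | .countLe c ψ, w, _ => {b | b ∈ M.dom w ∧ M.sat ψ w b}.encard ≤ (c : ℕ∞)

def KModel.constDom (M : KModel) : Prop := ∀ u v, M.dom u = M.dom v
def KModel.expDom (M : KModel) : Prop := ∀ u v, M.R u v → M.dom u ⊆ M.dom v
def KModel.decDom (M : KModel) : Prop := ∀ u v, M.R u v → M.dom v ⊆ M.dom u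

/-- Satisfiability with respect to QK (constant domains). -/
def satQK (φ : Fml) : Prop :=
  ∃ M : KModel, M.constDom ∧ ∃ w a, a ∈ M.dom w ∧ M.sat φ w a

/-- Satisfiability with respect to QK^exp (expanding domains). -/
def satQKexp (φ : Fml) : Prop :=
  ∃ M : KModel, M.expDom ∧ ∃ w a, a ∈ M.dom w ∧ M.sat φ w a

/-- Satisfiability with respect to QK^dec (decreasing domains). -/
def satQKdec (φ : Fml) : Prop :=
  ∃ M : KModel, M.decDom ∧ ∃ w a, a ∈ M.dom w ∧ M.sat φ w a

/-- `R` is the immediate-successor (parent–child) relation of a rooted irreflexive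
intransitive tree of depth ≤ m with root `r`. -/
def IsTreeOfDepth {W : Type} (R : W → W → Prop) (r : W) (m : ℕ) : Prop :=
  ∃ depth : W → ℕ,
    depth r = 0 ∧ (∀ w, depth w ≤ m) ∧
    (∀ u v, R u v → depth v = depth u + 1) ∧
    (∀ v, v ≠ r → ∃! u, R u v) ∧
    (∀ v, Relation.ReflTransGen R r v)

/-- Relativization φ^E of a formula to a fresh predicate E. -/
def relE (E : ℕ) : Fml → Fml
  | .atom p => .atom p
  | .neg ψ => .neg (relE E ψ)
  | .conj ψ χ => .conj (relE E ψ) (relE E χ)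
  | .dia ψ => .dia (relE E ψ)
  | .countLe c ψ => .countLe c (.conj (.atom E) (relE E ψ))

/-- `ζ_exp := □^{≤m} ∀x (E(x) → □E(x))`. -/
def zetaExp (E m : ℕ) : Fml :=
  Fml.boxLe m (Fml.fal ((Fml.atom E).imp (Fml.box (Fml.atom E))))

/-- `ζ_dec := ∀x □^{≤m} (◇E(x) → E(x))`. -/
def zetaDec (E m : ℕ) : Fml :=
  Fml.fal (Fml.boxLe m ((Fml.dia (Fml.atom E)).imp (Fml.atom E)))

/-- `⊤(x) := P₀(x) ∨ ¬P₀(x)`. -/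
def topP (P₀ : ℕ) : Fml := (Fml.atom P₀).or (Fml.neg (Fml.atom P₀))

/-- `∀x □^{≤m} ∀x (∃[≤N]x ⊤(x) ∧ ¬∃[≤N−1]x ⊤(x))`. -/
def zetaSize (P₀ m N : ℕ) : Fml :=
  Fml.fal (Fml.boxLe m (Fml.fal
    (Fml.conj (Fml.countLe N (topP P₀)) (Fml.neg (Fml.countLe (N - 1) (topP P₀))))))

/-- `ζ := ζ_exp ∧ ζ_dec ∧ ∀x□^{≤m}∀x(∃[≤N]x ⊤(x) ∧ ¬∃[≤N−1]x ⊤(x))`. -/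
def zeta78 (E P₀ m N : ℕ) : Fml :=
  Fml.conj (zetaExp E m) (Fml.conj (zetaDec E m) (zetaSize P₀ m N))

/-! A constant-domain model of `φ` with at most `N` individuals is padded to exactly `N`
individuals, the old ones marked by `E`; in the padded model every world has the same
domain, so `ζ` holds trivially and `φ^E` holds because `E` carves out the original domain.
Conversely, in an expanding-domain model of `E(x) ∧ ζ ∧ φ^E`, `ζ` forces every world within
`md φ` steps of the root to have exactly `N` individuals, so the expanding domains are in fact
constant there, and `ζ_exp`, `ζ_dec` make the extension of `E` constant as well. Taking that
extension as a constant domain and unravelling the frame by depth gives a QK-model of `φ`. -/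

def ReachIn {W : Type} (R : W → W → Prop) : ℕ → W → W → Prop
  | 0, u, v => u = v
  | n + 1, u, v => ∃ x, ReachIn R n u x ∧ R x v

namespace Fml

theorem boxIter_succ' (n : ℕ) (ψ : Fml) : boxIter (n + 1) ψ = boxIter n ψ.box := by
  induction n with
  | zero => rfl
  | succ n ih => rw [boxIter, ih, boxIter]

end Fml

def expReduction (E P₀ N : ℕ) (φ : Fml) : Fml :=
  Fml.conj (Fml.atom E) (Fml.conj (zeta78 E P₀ φ.md N) (relE E φ))

theorem ENat.le_and_not_le_pred_iff {e : ℕ∞} (he : e ≠ 0) (N : ℕ) :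
    (e ≤ N ∧ ¬e ≤ (N - 1 : ℕ)) ↔ e = N := by
  induction e using ENat.recTopCoe with
  | top => simp
  | coe n =>
    simp only [Nat.cast_le, Nat.cast_inj, ne_eq, Nat.cast_eq_zero] at he ⊢
    omega

namespace KModel

section Semantics

variable (M : KModel)

theorem sat_box (ψ : Fml) (w : M.W) (a : M.D) :
    M.sat ψ.box w a ↔ ∀ v, M.R w v → M.sat ψ v a := by
  simp [Fml.box, sat]

theorem sat_imp (ψ χ : Fml) (w : M.W) (a : M.D) :
    M.sat (ψ.imp χ) w a ↔ (M.sat ψ w a → M.sat χ w a) := by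
  simp [Fml.imp, sat]

theorem sat_fal (ψ : Fml) (w : M.W) (a : M.D) :
    M.sat ψ.fal w a ↔ ∀ b ∈ M.dom w, M.sat ψ w b := by
  simp [Fml.fal, sat, Set.eq_empty_iff_forall_notMem]

theorem sat_topP (P₀ : ℕ) (w : M.W) (a : M.D) : M.sat (topP P₀) w a := by
  simp [topP, Fml.or, sat]

theorem sat_boxIter (n : ℕ) (ψ : Fml) (w : M.W) (a : M.D) :
    M.sat (Fml.boxIter n ψ) w a ↔ ∀ v, ReachIn M.R n w v → M.sat ψ v a := by
  induction n generalizing ψ with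
  | zero => simp [Fml.boxIter, ReachIn]
  | succ n ih =>
    simp only [Fml.boxIter_succ', ih, sat_box, ReachIn]
    grind

theorem sat_boxLe (n : ℕ) (ψ : Fml) (w : M.W) (a : M.D) :
    M.sat (Fml.boxLe n ψ) w a ↔ ∀ k ≤ n, ∀ v, ReachIn M.R k w v → M.sat ψ v a := by
  induction n with
  | zero => simp [Fml.boxLe, ReachIn]
  | succ n ih =>
    simp only [Fml.boxLe, sat, ih, sat_boxIter, Nat.le_succ_iff]
    grind

theorem sat_zetaExp (E m : ℕ) (w : M.W) (a : M.D) :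
    M.sat (zetaExp E m) w a ↔ ∀ k ≤ m, ∀ v, ReachIn M.R k w v →
      ∀ b ∈ M.dom v, b ∈ M.I v E → ∀ u, M.R v u → b ∈ M.I u E := by
  simp only [zetaExp, sat_boxLe, sat_fal, sat_imp, sat_box]
  rfl

theorem sat_zetaDec (E m : ℕ) (w : M.W) (a : M.D) :
    M.sat (zetaDec E m) w a ↔ ∀ b ∈ M.dom w, ∀ k ≤ m, ∀ v, ReachIn M.R k w v →
      (∃ u, M.R v u ∧ b ∈ M.I u E) → b ∈ M.I v E := by
  simp only [zetaDec, sat_fal, sat_boxLe, sat_imp]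
  rfl

theorem sat_zetaSize (P₀ m N : ℕ) (w : M.W) (a : M.D) :
    M.sat (zetaSize P₀ m N) w a ↔
      ∀ k ≤ m, ∀ v, ReachIn M.R k w v → (M.dom v).encard = N := by
  have hdom (v : M.W) : {b | b ∈ M.dom v ∧ M.sat (topP P₀) v b} = M.dom v := by
    simp [sat_topP]
  simp only [zetaSize, sat_fal, sat_boxLe, (M.domNe w).forall_const]
  refine forall₄_congr fun k _ v _ => ?_
  simp only [sat, hdom, (M.domNe v).forall_const]
  exact ENat.le_and_not_le_pred_iff (M.domNe v).encard_pos.ne' N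

end Semantics

abbrev pad (M : KModel) (E : ℕ) {D' : Type} (ι : M.D → D') : KModel where
  W := M.W
  R := M.R
  D := D'
  Dne := M.Dne.map ι
  dom _ := Set.univ
  domNe _ := ⟨ι (Classical.choice M.Dne), trivial⟩
  I w p := if p = E then ι '' M.dom w else ι '' M.I w p
  Isub _ _ := Set.subset_univ _

theorem pad_I_self (M : KModel) (E : ℕ) {D' : Type} (ι : M.D → D') (w : M.W) :
    (M.pad E ι).I w E = ι '' M.dom w :=
  if_pos rfl

theorem pad_sat_relE_iff (M : KModel) {E : ℕ} {D' : Type} {ι : M.D → D'}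
    (hι : ι.Injective) {ψ : Fml} (hE : E ∉ ψ.preds) (w : M.W) (a : M.D) :
    (M.pad E ι).sat (relE E ψ) w (ι a) ↔ M.sat ψ w a := by
  induction ψ generalizing w a with
  | atom p =>
    have hpE : p ≠ E := by simpa [Fml.preds, eq_comm] using hE
    change ι a ∈ (if p = E then ι '' M.dom w else ι '' M.I w p) ↔ _
    rw [if_neg hpE, hι.mem_set_image]
    rfl
  | neg ψ ih => exact not_congr (ih hE w a)
  | conj ψ χ ihψ ihχ =>
    simp only [Fml.preds, Finset.mem_union, not_or] at hE
    exact and_congr (ihψ hE.1 w a) (ihχ hE.2 w a)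
  | dia ψ ih => exact exists_congr fun v => and_congr_right fun _ => ih hE v a
  | countLe c ψ ih =>
    have hset : {b | b ∈ (M.pad E ι).dom w ∧ (M.pad E ι).sat (.conj (.atom E) (relE E ψ)) w b}
        = ι '' {b | b ∈ M.dom w ∧ M.sat ψ w b} := by
      ext b'
      change b' ∈ Set.univ ∧ b' ∈ (M.pad E ι).I w E ∧ _ ↔ _
      rw [pad_I_self]
      constructor
      · rintro ⟨-, ⟨b, hb, rfl⟩, hψ⟩
        exact ⟨b, ⟨hb, (ih hE w b).1 hψ⟩, rfl⟩
      · rintro ⟨b, ⟨hb, hψ⟩, rfl⟩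
        exact ⟨trivial, ⟨b, hb, rfl⟩, (ih hE w b).2 hψ⟩
    change Set.encard _ ≤ _ ↔ Set.encard _ ≤ _
    rw [hset, hι.encard_image]

/-- Pairing each world with its depth confines the truth lemma `restrict_sat_iff` to worlds
within `md φ` steps of the root, the only ones where `ζ` controls `E`. -/
abbrev restrict (M : KModel) (DE : Set M.D) (hDE : DE.Nonempty) : KModel where
  W := M.W × ℕ
  R p q := M.R p.1 q.1 ∧ q.2 = p.2 + 1
  D := M.D
  Dne := M.Dne
  dom _ := DE
  domNe _ := hDE
  I p n := M.I p.1 n ∩ DE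
  Isub _ _ := Set.inter_subset_right

theorem restrict_sat_iff (M : KModel) {w : M.W} {E m : ℕ} (hDE : (M.I w E).Nonempty)
    (hEconst : ∀ k ≤ m, ∀ v, ReachIn M.R k w v → M.I v E = M.I w E)
    (ψ : Fml) {k : ℕ} {v : M.W} (hv : ReachIn M.R k w v) (hk : ψ.md + k ≤ m)
    {b : M.D} (hb : b ∈ M.I w E) :
    (M.restrict (M.I w E) hDE).sat ψ (v, k) b ↔ M.sat (relE E ψ) v b := by
  induction ψ generalizing k v b with
  | atom p => exact and_iff_left hb
  | neg ψ ih => exact not_congr (ih hv hk hb)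
  | conj ψ χ ihψ ihχ =>
    simp only [Fml.md] at hk
    exact and_congr (ihψ hv (by omega) hb) (ihχ hv (by omega) hb)
  | dia ψ ih =>
    simp only [Fml.md] at hk
    have ih' (u : M.W) (hu : M.R v u) :=
      ih (k := k + 1) (v := u) ⟨v, hv, hu⟩ (by omega) hb
    constructor
    · rintro ⟨⟨u, j⟩, ⟨hvu, rfl⟩, hψ⟩
      exact ⟨u, hvu, (ih' u hvu).1 hψ⟩
    · rintro ⟨u, hvu, hψ⟩
      exact ⟨(u, k + 1), ⟨hvu, rfl⟩, (ih' u hvu).2 hψ⟩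
  | countLe c ψ ih =>
    simp only [Fml.md] at hk
    have hvE := hEconst k (by omega) v hv
    have hset : {b' | b' ∈ M.I w E ∧ (M.restrict (M.I w E) hDE).sat ψ (v, k) b'} =
        {b' | b' ∈ M.dom v ∧ M.sat (.conj (.atom E) (relE E ψ)) v b'} := by
      ext b'
      change _ ↔ b' ∈ M.dom v ∧ b' ∈ M.I v E ∧ _
      rw [hvE]
      exact ⟨fun ⟨hb', hψ⟩ => ⟨M.Isub v E (hvE ▸ hb'), hb', (ih hv hk hb').1 hψ⟩,
        fun ⟨_, hb', hψ⟩ => ⟨hb', (ih hv hk hb').2 hψ⟩⟩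
    change Set.encard _ ≤ _ ↔ Set.encard _ ≤ _
    rw [hset]

theorem dom_eq_and_I_eq_of_sat_zeta78 (M : KModel) (hexp : M.expDom) {E P₀ m N : ℕ}
    {w : M.W} {a : M.D} (hζ : M.sat (zeta78 E P₀ m N) w a) :
    ∀ k ≤ m, ∀ v, ReachIn M.R k w v → M.dom v = M.dom w ∧ M.I v E = M.I w E := by
  obtain ⟨hexpE, hdecE, hsize⟩ := hζ
  rw [sat_zetaExp] at hexpE
  rw [sat_zetaDec] at hdecE
  rw [sat_zetaSize] at hsize
  intro k
  induction k with
  | zero => rintro - v rfl; exact ⟨rfl, rfl⟩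
  | succ k ih =>
    rintro hk v ⟨x, hx, hxv⟩
    obtain ⟨hxdom, hxE⟩ := ih (by omega) x hx
    have hdom : M.dom x = M.dom v :=
      (Set.finite_of_encard_eq_coe (hsize (k + 1) hk v ⟨x, hx, hxv⟩)).eq_of_subset_of_encard_le'
        (hexp x v hxv) (by rw [hsize k (by omega) x hx, hsize (k + 1) hk v ⟨x, hx, hxv⟩])
    refine ⟨hdom ▸ hxdom, subset_antisymm (fun b hb => ?_) (hxE ▸ fun b hb => ?_)⟩
    · have hbw : b ∈ M.dom w := hxdom ▸ hdom ▸ M.Isub v E hb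
      exact hxE ▸ hdecE b hbw k (by omega) x hx ⟨v, hxv, hb⟩
    · exact hexpE k (by omega) x hx b (M.Isub x E hb) hb v hxv

end KModel

theorem satQKexp_expReduction {φ : Fml} {E : ℕ} (hE : E ∉ φ.preds) (P₀ : ℕ) {N : ℕ}
    (M : KModel) (hc : M.constDom) [Finite M.D] (hcard : Nat.card M.D ≤ N)
    {w : M.W} {a : M.D} (ha : a ∈ M.dom w) (hφ : M.sat φ w a) :
    satQKexp (expReduction E P₀ N φ) := by
  obtain ⟨ι⟩ : Nonempty (M.D ↪ Fin N) := by
    have := Fintype.ofFinite M.D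
    rwa [Function.Embedding.nonempty_iff_card_le, Fintype.card_fin, ← Nat.card_eq_fintype_card]
  have hIE (u v : M.W) : (M.pad E ι).I u E = (M.pad E ι).I v E := by
    rw [KModel.pad_I_self, KModel.pad_I_self, hc u v]
  refine ⟨M.pad E ι, fun _ _ _ => subset_rfl, w, ι a, trivial, ?_, ⟨?_, ?_, ?_⟩, ?_⟩
  · change ι a ∈ (M.pad E ι).I w E
    rw [KModel.pad_I_self]
    exact Set.mem_image_of_mem ι ha
  · rw [KModel.sat_zetaExp]
    intro _ _ v _ b _ hb u _
    rwa [hIE u v]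
  · rw [KModel.sat_zetaDec]
    rintro b - k - v - ⟨u, -, hb⟩
    rwa [hIE v u]
  · rw [KModel.sat_zetaSize]
    intro _ _ _ _
    simp
  · exact (M.pad_sat_relE_iff ι.injective hE w a).2 hφ

theorem satQK_of_satQKexp_expReduction {φ : Fml} {E P₀ N : ℕ}
    (h : satQKexp (expReduction E P₀ N φ)) : satQK φ := by
  obtain ⟨M, hexp, w, a, -, haE, hζ, hφ⟩ := h
  have hEconst := M.dom_eq_and_I_eq_of_sat_zeta78 hexp hζ
  exact ⟨M.restrict (M.I w E) ⟨a, haE⟩, fun _ _ => rfl, (w, 0), a, haE,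
    (M.restrict_sat_iff ⟨a, haE⟩ (fun k hk v hv => (hEconst k hk v hv).2) φ
      (k := 0) rfl (by omega) haE).2 hφ⟩

theorem stmt_7_general (φ : Fml) (E P₀ : ℕ) (hE : E ∉ φ.preds) (N : ℕ)
    (hN : satQK φ → ∃ M : KModel, M.constDom ∧ Finite M.D ∧ Nat.card M.D ≤ N ∧
      ∃ w a, a ∈ M.dom w ∧ M.sat φ w a) :
    satQK φ ↔
      satQKexp (Fml.conj (Fml.atom E) (Fml.conj (zeta78 E P₀ φ.md N) (relE E φ))) := by
  refine ⟨fun h => ?_, satQK_of_satQKexp_expReduction⟩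
  obtain ⟨M, hc, _, hcard, w, a, ha, hφ⟩ := hN h
  exact satQKexp_expReduction hE P₀ M hc hcard ha hφ

/-- given a bound N ≥ 1 on the domain size needed for constant-domain
satisfiability of φ, φ is satisfiable with respect to QK iff `E(x) ∧ ζ ∧ φ^E` is
satisfiable with respect to QK^exp. -/
theorem stmt_7 (φ : Fml) (E P₀ : ℕ) (hE : E ∉ φ.preds) (N : ℕ) (hN1 : 1 ≤ N)
    (hN : satQK φ → ∃ M : KModel, M.constDom ∧ Finite M.D ∧ Nat.card M.D ≤ N ∧
      ∃ w a, a ∈ M.dom w ∧ M.sat φ w a) :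
    satQK φ ↔
      satQKexp (Fml.conj (Fml.atom E) (Fml.conj (zeta78 E P₀ φ.md N) (relE E φ))) :=
  stmt_7_general φ E P₀ hE N hN
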